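/- Dragomir's first Pečarić-type bound: Let x, y_1, ..., y_n be vectors in an inner product space (H, ⟨·,·⟩) over the real or complex field 𝕂 and let c_1, ..., c_n ∈ 𝕂. Then | ∑_{k=1}^n c_k ⟨x, y_k⟩ |² ≤ ‖x‖² · ( max_{1≤k≤n} |c_k| ) · ( ∑_{k=1}^n |c_k| ) · max_{1≤i≤n} ( ∑_{j=1}^n |⟨y_i, y_j⟩| ). -/

import Mathlib

/-!
Writing `v = ∑ k, c k • y k`, the sum is `⟪x, v⟫`, so Cauchy–Schwarz bounds its square by
`‖x‖² ‖v‖²`. Expanding `‖v‖² = ⟪v, v⟫` gives `‖v‖² ≤ ∑ i j, |c i| |c j| |⟪y i, y j⟫|`; bounding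
`|c j|` by `max |c|` and each row sum `∑ j |⟪y i, y j⟫|` by its maximum leaves `max |c| · ∑ |c|`.
-/

open Finset

section InnerProduct

variable {𝕜 H ι : Type*} [RCLike 𝕜] [NormedAddCommGroup H] [InnerProductSpace 𝕜 H]

theorem sum_mul_inner_eq_inner_sum_smul (s : Finset ι) (x : H) (y : ι → H) (c : ι → 𝕜) :
    ∑ k ∈ s, c k * inner 𝕜 x (y k) = inner 𝕜 x (∑ k ∈ s, c k • y k) := by
  simp only [inner_sum, inner_smul_right]

theorem norm_sum_smul_sq_le (s : Finset ι) (y : ι → H) (c : ι → 𝕜) :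
    ‖∑ k ∈ s, c k • y k‖ ^ 2 ≤
      ∑ i ∈ s, ∑ j ∈ s, ‖c i‖ * ‖c j‖ * ‖(inner 𝕜 (y i) (y j) : 𝕜)‖ := by
  set v := ∑ k ∈ s, c k • y k
  have expand : (inner 𝕜 v v : 𝕜) =
      ∑ i ∈ s, ∑ j ∈ s, starRingEnd 𝕜 (c i) * c j * inner 𝕜 (y i) (y j) := by
    simp only [v, sum_inner, inner_sum, inner_smul_left, inner_smul_right, mul_sum]
    rw [sum_comm]
    exact sum_congr rfl fun i _ => sum_congr rfl fun j _ => by ring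
  calc ‖v‖ ^ 2 = RCLike.re (inner 𝕜 v v : 𝕜) := (inner_self_eq_norm_sq v).symm
    _ ≤ ‖(inner 𝕜 v v : 𝕜)‖ := RCLike.re_le_norm _
    _ ≤ _ := by
      rw [expand]
      refine (norm_sum_le _ _).trans (sum_le_sum fun i _ => ?_)
      refine (norm_sum_le _ _).trans (sum_le_sum fun j _ => ?_)
      simp only [norm_mul, RCLike.norm_conj, le_refl]

end InnerProduct

theorem sum_sum_mul_mul_le_of_le {ι : Type*} (s : Finset ι) {a : ι → ℝ} {b : ι → ι → ℝ}
    {M T : ℝ} (ha : ∀ i ∈ s, 0 ≤ a i) (hb : ∀ i ∈ s, ∀ j ∈ s, 0 ≤ b i j)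
    (haM : ∀ j ∈ s, a j ≤ M) (hbT : ∀ i ∈ s, ∑ j ∈ s, b i j ≤ T) :
    ∑ i ∈ s, ∑ j ∈ s, a i * a j * b i j ≤ M * (∑ i ∈ s, a i) * T := by
  have row (i : ι) (hi : i ∈ s) : ∑ j ∈ s, a i * a j * b i j ≤ a i * (M * T) := by
    have hM : 0 ≤ M := (ha i hi).trans (haM i hi)
    calc ∑ j ∈ s, a i * a j * b i j ≤ ∑ j ∈ s, a i * M * b i j :=
          sum_le_sum fun j hj =>
            mul_le_mul_of_nonneg_right (mul_le_mul_of_nonneg_left (haM j hj) (ha i hi)) (hb i hi j hj)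
      _ = a i * M * ∑ j ∈ s, b i j := by rw [mul_sum]
      _ ≤ a i * M * T := by gcongr; exacts [mul_nonneg (ha i hi) hM, hbT i hi]
      _ = a i * (M * T) := by ring
  calc ∑ i ∈ s, ∑ j ∈ s, a i * a j * b i j ≤ ∑ i ∈ s, a i * (M * T) := sum_le_sum row
    _ = M * (∑ i ∈ s, a i) * T := by rw [← sum_mul]; ring

/-- Dragomir's first Pečarić-type bound. -/
theorem dragomir_pecaric_type_first {𝕜 H : Type*} [RCLike 𝕜] [NormedAddCommGroup H]
    [InnerProductSpace 𝕜 H] {n : ℕ} (hn : 0 < n) (x : H) (y : Fin n → H) (c : Fin n → 𝕜) :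
    ‖∑ k, c k * (inner 𝕜 x (y k) : 𝕜)‖ ^ 2 ≤
      ‖x‖ ^ 2 *
        (Finset.univ.sup' (Finset.univ_nonempty_iff.mpr (Fin.pos_iff_nonempty.mp hn))
          (fun k => ‖c k‖)) *
        (∑ k, ‖c k‖) *
        Finset.univ.sup' (Finset.univ_nonempty_iff.mpr (Fin.pos_iff_nonempty.mp hn))
          (fun i => ∑ j, ‖(inner 𝕜 (y i) (y j) : 𝕜)‖) := by
  have hne : (univ : Finset (Fin n)).Nonempty :=
    univ_nonempty_iff.mpr (Fin.pos_iff_nonempty.mp hn)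
  have gram_bound := sum_sum_mul_mul_le_of_le univ (a := fun k => ‖c k‖)
    (b := fun i j => ‖(inner 𝕜 (y i) (y j) : 𝕜)‖)
    (M := univ.sup' hne fun k => ‖c k‖)
    (T := univ.sup' hne fun i => ∑ j, ‖(inner 𝕜 (y i) (y j) : 𝕜)‖)
    (fun _ _ => norm_nonneg _) (fun _ _ _ _ => norm_nonneg _)
    (fun j _ => le_sup' (fun k => ‖c k‖) (mem_univ j))
    (fun i _ => le_sup' (fun i => ∑ j, ‖(inner 𝕜 (y i) (y j) : 𝕜)‖) (mem_univ i))
  rw [sum_mul_inner_eq_inner_sum_smul]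
  calc ‖(inner 𝕜 x (∑ k, c k • y k) : 𝕜)‖ ^ 2 ≤ (‖x‖ * ‖∑ k, c k • y k‖) ^ 2 := by
        gcongr; exact norm_inner_le_norm _ _
    _ = ‖x‖ ^ 2 * ‖∑ k, c k • y k‖ ^ 2 := mul_pow _ _ _
    _ ≤ _ := by
      rw [mul_assoc (‖x‖ ^ 2), mul_assoc (‖x‖ ^ 2)]
      gcongr
      exact (norm_sum_smul_sq_le univ y c).trans gram_bound
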